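/- arXiv:2403.05071 — 4 statements merged into one kernel-verified Lean document; each statement's English description precedes it below -/
import Mathlib

section
/- Let T ∈ B_{A^{1/2}}(H). If λ ∈ σ_{A,app}(T), then λ^n ∈ σ_{A,app}(T^n) for every positive integer n. -/
open Filter Topology ContinuousLinearMap

variable {H : Type*} [NormedAddCommGroup H] [InnerProductSpace ℂ H] [CompleteSpace H]

/-- The `A`-seminorm `‖x‖_A = ⟨Ax,x⟩^{1/2}`. -/
noncomputable def anorm (A : H →L[ℂ] H) (x : H) : ℝ :=
  Real.sqrt (inner ℂ (A x) x : ℂ).re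

/-- `B_{A^{1/2}}(H)`: the `A`-bounded operators. -/
def MemBAhalf (A T : H →L[ℂ] H) : Prop :=
  ∃ d > 0, ∀ ξ : H, anorm A (T ξ) ≤ d * anorm A ξ

/-- `B_A(H)`: operators admitting an `A`-adjoint. -/
def MemBA (A T : H →L[ℂ] H) : Prop :=
  Set.range (fun x => ContinuousLinearMap.adjoint T (A x)) ⊆ Set.range A

/-- A-invertibility in `B_{A^{1/2}}(H)`. -/
def AInvertibleHalf (A T : H →L[ℂ] H) : Prop :=
  ∃ S : H →L[ℂ] H, S ≠ 0 ∧ MemBAhalf A S ∧ A ∘L T ∘L S = A ∧ A ∘L S ∘L T = A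

/-- A-invertibility in `B_A(H)`. -/
def AInvertibleBA (A T : H →L[ℂ] H) : Prop :=
  ∃ S : H →L[ℂ] H, S ≠ 0 ∧ MemBA A S ∧ A ∘L T ∘L S = A ∧ A ∘L S ∘L T = A

/-- The `A`-approximate point spectrum. -/
def sigmaAapp (A T : H →L[ℂ] H) : Set ℂ :=
  {lam | ∃ x : ℕ → H, (∀ n, anorm A (x n) = 1) ∧
    Tendsto (fun n => anorm A (T (x n) - lam • x n)) atTop (nhds 0)}

/-- The `A`-spectrum. -/
def sigmaA (A T : H →L[ℂ] H) : Set ℂ :=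
  {lam | ¬ AInvertibleHalf A (lam • (1 : H →L[ℂ] H) - T)}

/-- The `A`-numerical range. -/
def WA (A T : H →L[ℂ] H) : Set ℂ :=
  {z | ∃ x : H, anorm A x = 1 ∧ z = (inner ℂ (A (T x)) x : ℂ)}

/-- The `A`-operator seminorm, sup over the closure of the range of `A`. -/
noncomputable def AopnormCl (A T : H →L[ℂ] H) : ℝ :=
  sSup {r | ∃ ξ ∈ closure (Set.range A), anorm A ξ ≤ 1 ∧ r = anorm A (T ξ)}

/-- The `A`-operator seminorm, sup over all vectors of `A`-seminorm at most one. -/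
noncomputable def Aopnorm (A T : H →L[ℂ] H) : ℝ :=
  sSup {r | ∃ ξ : H, anorm A ξ ≤ 1 ∧ r = anorm A (T ξ)}

/-- The `A`-numerical radius. -/
noncomputable def wA (A T : H →L[ℂ] H) : ℝ :=
  sSup {r | ∃ x : H, anorm A x = 1 ∧ r = ‖(inner ℂ (A (T x)) x : ℂ)‖}

/-- The `A`-reduced minimum modulus. -/
noncomputable def gammaA (A T : H →L[ℂ] H) : ℝ :=
  sInf {r | ∃ ξ : H, (∀ y : H, anorm A (T y) = 0 → (inner ℂ (A ξ) y : ℂ) = 0) ∧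
    anorm A ξ = 1 ∧ r = anorm A (T ξ)}

/-- closure of the range of `A` as a submodule. -/
noncomputable def rangeClosure (A : H →L[ℂ] H) : Submodule ℂ H :=
  (LinearMap.range (A : H →ₗ[ℂ] H)).topologicalClosure

noncomputable instance (A : H →L[ℂ] H) : CompleteSpace (rangeClosure A) :=
  (Submodule.isClosed_topologicalClosure _).completeSpace_coe

/-- orthogonal projection onto the closure of the range of `A`, as an operator on `H`. -/
noncomputable def Pcl (A : H →L[ℂ] H) : H →L[ℂ] H :=
  (rangeClosure A).subtypeL ∘L (rangeClosure A).orthogonalProjectionOnto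

/-! Writing `A = b† b`, the `A`-seminorm is `x ↦ ‖b x‖`, and the operators bounded with respect
to a seminorm form a subalgebra. Since `T ^ n - λ ^ n = S (T - λ)` with
`S = ∑ T ^ i λ ^ (n - 1 - i)` in that subalgebra, `‖(T ^ n - λ ^ n) x‖_A ≤ C ‖(T - λ) x‖_A`. -/

namespace Seminorm

variable {𝕜 E : Type*} [NormedField 𝕜] [SeminormedAddCommGroup E] [NormedSpace 𝕜 E]

def boundedSubalgebra (p : Seminorm 𝕜 E) : Subalgebra 𝕜 (E →L[𝕜] E) where
  carrier := {S | ∃ C ≥ 0, ∀ x, p (S x) ≤ C * p x}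
  mul_mem' := by
    rintro S T ⟨C, hC, hS⟩ ⟨D, hD, hT⟩
    exact ⟨C * D, mul_nonneg hC hD, fun x =>
      calc p (S (T x)) ≤ C * p (T x) := hS _
        _ ≤ C * (D * p x) := by gcongr; exact hT x
        _ = C * D * p x := by ring⟩
  add_mem' := by
    rintro S T ⟨C, hC, hS⟩ ⟨D, hD, hT⟩
    exact ⟨C + D, add_nonneg hC hD, fun x =>
      calc p (S x + T x) ≤ p (S x) + p (T x) := map_add_le_add p _ _
        _ ≤ C * p x + D * p x := add_le_add (hS x) (hT x)
        _ = (C + D) * p x := by ring⟩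
  algebraMap_mem' c := ⟨‖c‖, norm_nonneg c, fun x => (map_smul_eq_mul p c x).le⟩

theorem tendsto_pow_apply_sub_smul {p : Seminorm 𝕜 E} {T : E →L[𝕜] E}
    (hT : T ∈ p.boundedSubalgebra) {ι : Type*} {l : Filter ι} {x : ι → E} {lam : 𝕜}
    (hx : Tendsto (fun k => p (T (x k) - lam • x k)) l (𝓝 0)) (n : ℕ) :
    Tendsto (fun k => p ((T ^ n) (x k) - lam ^ n • x k)) l (𝓝 0) := by
  set S := ∑ i ∈ Finset.range n, T ^ i * algebraMap 𝕜 _ lam ^ (n - 1 - i)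
  have hS : S ∈ p.boundedSubalgebra :=
    Subalgebra.sum_mem _ fun i _ =>
      Subalgebra.mul_mem _ (Subalgebra.pow_mem _ hT i)
        (Subalgebra.pow_mem _ (Subalgebra.algebraMap_mem _ lam) _)
  have hfactor : T ^ n - algebraMap 𝕜 _ (lam ^ n) = S * (T - algebraMap 𝕜 _ lam) := by
    rw [map_pow]
    exact ((Algebra.commute_algebraMap_right lam T).geom_sum₂_mul n).symm
  have happly (y : E) : (T ^ n) y - lam ^ n • y = S (T y - lam • y) := by
    simpa [Algebra.algebraMap_eq_smul_one] using congrArg (· y) hfactor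
  obtain ⟨C, -, hC⟩ := hS
  simp only [happly]
  exact squeeze_zero (fun k => apply_nonneg p _) (fun k => hC _) (by simpa using hx.const_mul C)

end Seminorm

theorem ContinuousLinearMap.IsPositive.exists_anorm_eq_norm_apply {A : H →L[ℂ] H}
    (hA : A.IsPositive) : ∃ b : H →L[ℂ] H, ∀ x, anorm A x = ‖b x‖ := by
  obtain ⟨b, rfl⟩ :=
    CStarAlgebra.nonneg_iff_eq_star_mul_self.mp ((nonneg_iff_isPositive A).mpr hA)
  exact ⟨b, fun x => (b.apply_norm_eq_sqrt_inner_adjoint_left x).symm⟩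

theorem stmt7_general (A T : H →L[ℂ] H) (hA : A.IsPositive)
    (hT : MemBAhalf A T) (lam : ℂ) (hlam : lam ∈ sigmaAapp A T) :
    ∀ n : ℕ, 0 < n → lam ^ n ∈ sigmaAapp A (T ^ n) := by
  intro n _
  obtain ⟨b, hb⟩ := hA.exists_anorm_eq_norm_apply
  set p := (normSeminorm ℂ H).comp (b : H →ₗ[ℂ] H)
  have hp : anorm A = p := funext hb
  obtain ⟨d, hd, hTd⟩ := hT
  obtain ⟨x, hx1, hx⟩ := hlam
  refine ⟨x, hx1, ?_⟩
  rw [hp] at hTd hx ⊢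
  exact p.tendsto_pow_apply_sub_smul ⟨d, hd.le, hTd⟩ hx n

/-- if `λ ∈ σ_{A,app}(T)` then `λ^n ∈ σ_{A,app}(T^n)` for all `n ≥ 1`. -/
theorem stmt7 (A T : H →L[ℂ] H) (hA : A.IsPositive) (hA0 : A ≠ 0)
    (hT : MemBAhalf A T) (lam : ℂ) (hlam : lam ∈ sigmaAapp A T) :
    ∀ n : ℕ, 0 < n → lam ^ n ∈ sigmaAapp A (T ^ n) :=
  stmt7_general A T hA hT lam hlam
end

section
/- Let T ∈ B_{A^{1/2}}(H). Then σ_{A,app}(T) = σ_{A,app}((T^◇)^◇). -/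
open Filter Topology ContinuousLinearMap

variable {H : Type*} [NormedAddCommGroup H] [InnerProductSpace ℂ H] [CompleteSpace H]

/-!
Taking adjoints in `A^{1/2} T^◇ = T^* A^{1/2}` gives `(T^◇)^* A^{1/2} = A^{1/2} T`, so
`A^{1/2} (T^◇)^◇ = (T^◇)^* A^{1/2} = A^{1/2} T`. Since `‖x‖_A = ‖A^{1/2} x‖`, the quantities
`‖(S - λ) x‖_A` agree for `S = T` and `S = (T^◇)^◇`, for every `λ` and every `x`.
-/

theorem IsSelfAdjoint.comp_eq_comp_of_intertwines {𝕜 E : Type*} [RCLike 𝕜]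
    [NormedAddCommGroup E] [InnerProductSpace 𝕜 E] [CompleteSpace E] {S T X Y : E →L[𝕜] E}
    (hS : IsSelfAdjoint S) (hX : S ∘L X = adjoint T ∘L S) (hY : S ∘L Y = adjoint X ∘L S) :
    S ∘L Y = S ∘L T := by
  have hX' : adjoint X ∘L S = S ∘L T := by
    simpa only [adjoint_comp, adjoint_adjoint, hS.adjoint_eq] using congrArg adjoint hX
  rw [hY, hX']

theorem anorm_adjoint_comp_self (R : H →L[ℂ] H) (x : H) : anorm (adjoint R ∘L R) x = ‖R x‖ := by
  rw [anorm, comp_apply, adjoint_inner_left, inner_self_eq_norm_sq_to_K]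
  norm_cast
  exact Real.sqrt_sq (norm_nonneg _)

theorem sigmaAapp_eq_of_comp_eq {A R T T' : H →L[ℂ] H} (hA : adjoint R ∘L R = A)
    (h : R ∘L T = R ∘L T') : sigmaAapp A T = sigmaAapp A T' := by
  have hnorm : ∀ (lam : ℂ) (x : H), anorm A (T x - lam • x) = anorm A (T' x - lam • x) := by
    intro lam x
    rw [← hA, anorm_adjoint_comp_self, anorm_adjoint_comp_self, map_sub, map_sub,
      ← comp_apply R T, h, comp_apply]
  ext lam
  simp only [sigmaAapp, Set.mem_ofPred_eq, hnorm]

theorem stmt11_general (A T sqrtA Tdia Tdd : H →L[ℂ] H)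
    (hsqpos : sqrtA.IsPositive) (hsq : sqrtA ∘L sqrtA = A)
    (hdia : sqrtA ∘L Tdia = (ContinuousLinearMap.adjoint T) ∘L sqrtA)
    (hdd : sqrtA ∘L Tdd = (ContinuousLinearMap.adjoint Tdia) ∘L sqrtA) :
    sigmaAapp A T = sigmaAapp A Tdd := by
  have hsa : IsSelfAdjoint sqrtA := hsqpos.isSelfAdjoint
  refine sigmaAapp_eq_of_comp_eq ?_ (hsa.comp_eq_comp_of_intertwines hdia hdd).symm
  rw [hsa.adjoint_eq, hsq]

/-- `σ_{A,app}(T) = σ_{A,app}((T^◇)^◇)`. -/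
theorem stmt11 (A T sqrtA Tdia Tdd : H →L[ℂ] H) (hA : A.IsPositive) (hA0 : A ≠ 0)
    (hsqpos : sqrtA.IsPositive) (hsq : sqrtA ∘L sqrtA = A)
    (hT : MemBAhalf A T)
    (hdia : sqrtA ∘L Tdia = (ContinuousLinearMap.adjoint T) ∘L sqrtA)
    (hrange : Set.range Tdia ⊆ closure (Set.range sqrtA))
    (hdd : sqrtA ∘L Tdd = (ContinuousLinearMap.adjoint Tdia) ∘L sqrtA)
    (hrange' : Set.range Tdd ⊆ closure (Set.range sqrtA)) :
    sigmaAapp A T = sigmaAapp A Tdd :=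
  stmt11_general A T sqrtA Tdia Tdd hsqpos hsq hdia hdd
end

section
/- Let T ∈ B_A(H) and define T_a : cl(R(A)) → cl(R(A)) by T_a = (A^{1/2})^† T* A^{1/2} restricted to cl(R(A)). Then T is A-normal (meaning ‖Tx‖_A = ‖T^♯ x‖_A for all x ∈ H) if and only if T_a is a normal operator on the Hilbert space cl(R(A)). -/
open Filter Topology ContinuousLinearMap

variable {H : Type*} [NormedAddCommGroup H] [InnerProductSpace ℂ H] [CompleteSpace H]

/-! Write `A = S ∘L S` with `S = A^{1/2}` self-adjoint. Then `cl R(A) = (ker S)ᗮ`, on which `S`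
is injective, and `x ↦ S x` maps `H` onto a dense subspace of it with `‖S x‖ = ‖x‖_A`. The
relations defining `T_a` and the `A`-adjoint `Ts` give `T_a (S x) = S (Ts x)` and
`T_a^* (S x) = S (T x)`, so `A`-normality of `T` says exactly that `‖T_a z‖ = ‖T_a^* z‖` on a
dense set, hence everywhere, which is normality of `T_a`. -/

open scoped InnerProduct

namespace ContinuousLinearMap

variable {𝕜 E F : Type*} [RCLike 𝕜] [NormedAddCommGroup E] [InnerProductSpace 𝕜 E]
  [NormedAddCommGroup F] [InnerProductSpace 𝕜 F]

theorem topologicalClosure_range_adjoint_comp_self [CompleteSpace E] [CompleteSpace F]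
    (T : E →L[𝕜] F) : (T† ∘L T).range.topologicalClosure = T.kerᗮ := by
  rw [← ker_adjoint_comp_self, orthogonal_ker, adjoint_comp, adjoint_adjoint]

theorem injOn_orthogonal_ker (T : E →L[𝕜] F) : Set.InjOn T T.kerᗮ := by
  intro u hu v hv huv
  have hker : u - v ∈ T.ker := by simp [huv]
  have hperp : u - v ∈ T.kerᗮ := sub_mem hu hv
  exact sub_eq_zero.1 <|
    (Submodule.mem_bot 𝕜).1 (T.ker.inf_orthogonal_eq_bot ▸ Submodule.mem_inf.2 ⟨hker, hperp⟩)

theorem denseRange_codRestrict (f : E →L[𝕜] F) {K : Submodule 𝕜 F} (h : ∀ x, f x ∈ K)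
    (hK : (K : Set F) ⊆ closure (Set.range f)) : DenseRange (f.codRestrict K h) :=
  Subtype.dense_iff.2 (by rwa [← Set.range_comp])

end ContinuousLinearMap

namespace IsSelfAdjoint

variable {S : H →L[ℂ] H}

theorem anorm_comp_self (hS : IsSelfAdjoint S) (x : H) : anorm (S ∘L S) x = ‖S x‖ := by
  rw [anorm, comp_apply, ← hS.adjoint_eq, adjoint_inner_left, hS.adjoint_eq,
    ← RCLike.re_to_complex, inner_self_eq_norm_sq, Real.sqrt_sq (norm_nonneg _)]

theorem rangeClosure_comp_self (hS : IsSelfAdjoint S) : rangeClosure (S ∘L S) = S.kerᗮ := by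
  unfold rangeClosure
  simpa only [hS.adjoint_eq] using S.topologicalClosure_range_adjoint_comp_self

theorem apply_mem_rangeClosure_comp_self (hS : IsSelfAdjoint S) (x : H) :
    S x ∈ rangeClosure (S ∘L S) := by
  rw [hS.rangeClosure_comp_self, S.orthogonal_ker, hS.adjoint_eq]
  exact Submodule.le_topologicalClosure _ ⟨x, rfl⟩

noncomputable def toRangeClosure (hS : IsSelfAdjoint S) : H →L[ℂ] rangeClosure (S ∘L S) :=
  S.codRestrict _ hS.apply_mem_rangeClosure_comp_self

@[simp]
theorem coe_toRangeClosure_apply (hS : IsSelfAdjoint S) (x : H) :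
    (hS.toRangeClosure x : H) = S x :=
  rfl

theorem denseRange_toRangeClosure (hS : IsSelfAdjoint S) : DenseRange hS.toRangeClosure := by
  refine S.denseRange_codRestrict _ ?_
  rw [hS.rangeClosure_comp_self, S.orthogonal_ker, hS.adjoint_eq,
    Submodule.topologicalClosure_coe]
  exact subset_rfl

theorem eq_of_apply_eq (hS : IsSelfAdjoint S) {z w : rangeClosure (S ∘L S)}
    (h : S z = S w) : z = w := by
  have hmem : ∀ u : rangeClosure (S ∘L S), (u : H) ∈ S.kerᗮ := fun u ↦
    hS.rangeClosure_comp_self ▸ u.2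
  exact Subtype.ext (S.injOn_orthogonal_ker (hmem z) (hmem w) h)

variable {T Ts : H →L[ℂ] H} {Ta : rangeClosure (S ∘L S) →L[ℂ] rangeClosure (S ∘L S)}

theorem comp_toRangeClosure (hS : IsSelfAdjoint S) (hTs : T† ∘L (S ∘L S) = (S ∘L S) ∘L Ts)
    (hTa : ∀ z : rangeClosure (S ∘L S), S (Ta z) = (T†) (S z)) :
    Ta ∘L hS.toRangeClosure = hS.toRangeClosure ∘L Ts := by
  ext x : 1
  apply hS.eq_of_apply_eq
  simpa [hTa] using congr($hTs x)

theorem adjoint_comp_toRangeClosure (hS : IsSelfAdjoint S)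
    (hTs : T† ∘L (S ∘L S) = (S ∘L S) ∘L Ts)
    (hTa : ∀ z : rangeClosure (S ∘L S), S (Ta z) = (T†) (S z)) :
    Ta† ∘L hS.toRangeClosure = hS.toRangeClosure ∘L T := by
  ext x : 1
  refine ext_inner_right ℂ fun w ↦ congrFun (hS.denseRange_toRangeClosure.equalizer
    (continuous_const.inner continuous_id) (continuous_const.inner continuous_id) ?_) w
  funext y
  have hsymm : ∀ u v : H, inner ℂ (S u) v = inner ℂ u (S v) := fun u v ↦ by
    rw [← adjoint_inner_left, hS.adjoint_eq]
  have hTaσ : Ta (hS.toRangeClosure y) = hS.toRangeClosure (Ts y) :=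
    congr($(hS.comp_toRangeClosure hTs hTa) y)
  have hTsy : S (S (Ts y)) = (T†) (S (S y)) := by simpa using congr($hTs y).symm
  simp only [Function.comp_apply, id_eq, adjoint_inner_left, hTaσ, comp_apply,
    Submodule.coe_inner, coe_toRangeClosure_apply]
  rw [hsymm, hTsy, adjoint_inner_right, hsymm]

end IsSelfAdjoint

theorem stmt18_general (A T sqrtA Ts : H →L[ℂ] H)
    (hsqpos : sqrtA.IsPositive) (hsq : sqrtA ∘L sqrtA = A)
    (hTs : (ContinuousLinearMap.adjoint T) ∘L A = A ∘L Ts)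
    (Ta : rangeClosure A →L[ℂ] rangeClosure A)
    (hTa : ∀ z : rangeClosure A,
      sqrtA ((Ta z : H)) = (ContinuousLinearMap.adjoint T) (sqrtA (z : H))) :
    (∀ x : H, anorm A (T x) = anorm A (Ts x)) ↔
      Ta ∘L (ContinuousLinearMap.adjoint Ta) = (ContinuousLinearMap.adjoint Ta) ∘L Ta := by
  subst hsq
  have hS : IsSelfAdjoint sqrtA := hsqpos.isSelfAdjoint
  have hσT := hS.adjoint_comp_toRangeClosure hTs hTa
  have hσTs := hS.comp_toRangeClosure hTs hTa
  have hnormT (x : H) : anorm (sqrtA ∘L sqrtA) (T x) = ‖(Ta†) (hS.toRangeClosure x)‖ := by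
    rw [← comp_apply (Ta†), hσT, hS.anorm_comp_self]
    rfl
  have hnormTs (x : H) : anorm (sqrtA ∘L sqrtA) (Ts x) = ‖Ta (hS.toRangeClosure x)‖ := by
    rw [← comp_apply Ta, hσTs, hS.anorm_comp_self]
    rfl
  calc (∀ x, anorm (sqrtA ∘L sqrtA) (T x) = anorm (sqrtA ∘L sqrtA) (Ts x))
      ↔ ∀ x, ‖Ta (hS.toRangeClosure x)‖ = ‖(Ta†) (hS.toRangeClosure x)‖ :=
        forall_congr' fun x ↦ by rw [hnormT, hnormTs, eq_comm]
    _ ↔ ∀ z, ‖Ta z‖ = ‖(Ta†) z‖ :=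
        ⟨fun h ↦ congrFun (hS.denseRange_toRangeClosure.equalizer Ta.continuous.norm
          (Ta†).continuous.norm (funext h)), fun h x ↦ h _⟩
    _ ↔ IsStarNormal Ta := isStarNormal_iff_norm_eq_adjoint.symm
    _ ↔ _ := by rw [isStarNormal_iff, Commute, SemiconjBy, eq_comm]; rfl

/-- `T ∈ B_A(H)` is `A`-normal iff `T_a` is a normal operator on `cl(R(A))`,
where `T_a` is determined by `A^{1/2} (T_a z) = T^* (A^{1/2} z)` for `z ∈ cl(R(A))`. -/
theorem stmt18 (A T sqrtA Ts : H →L[ℂ] H) (hA : A.IsPositive) (hA0 : A ≠ 0)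
    (hT : MemBA A T)
    (hsqpos : sqrtA.IsPositive) (hsq : sqrtA ∘L sqrtA = A)
    (hTs : (ContinuousLinearMap.adjoint T) ∘L A = A ∘L Ts)
    (hTsr : Set.range Ts ⊆ closure (Set.range A))
    (Ta : rangeClosure A →L[ℂ] rangeClosure A)
    (hTa : ∀ z : rangeClosure A,
      sqrtA ((Ta z : H)) = (ContinuousLinearMap.adjoint T) (sqrtA (z : H))) :
    (∀ x : H, anorm A (T x) = anorm A (Ts x)) ↔
      Ta ∘L (ContinuousLinearMap.adjoint Ta) = (ContinuousLinearMap.adjoint Ta) ∘L Ta :=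
  stmt18_general A T sqrtA Ts hsqpos hsq hTs Ta hTa
end

section
/- Let T ∈ B_A(H) be A-normal and suppose R(A) is closed. Then σ_A(T) = σ_{A,app}(T). -/
open Filter Topology ContinuousLinearMap

variable {H : Type*} [NormedAddCommGroup H] [InnerProductSpace ℂ H] [CompleteSpace H]

/-!
Write `‖x‖_A = ‖A^{1/2} x‖`. If `λ - T` is `A`-invertible, then `A S (λ - T) = A` makes `λ - T`
bounded below for `‖·‖_A`, which rules out approximate eigenvectors. Conversely, suppose `λ - T`
is bounded below for `‖·‖_A`; by `A`-normality `‖(λ - T) x‖_A = ‖(conj λ - Ts) x‖_A`, so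
`conj λ - Ts` is bounded below as well. Compress `λ - T` to the closed subspace `R(A)`. By the open
mapping theorem the norm is dominated by `‖·‖_A` on `R(A)`, so the compression is bounded below in
norm. Its range is dense: a vector of `R(A)` orthogonal to it has the form `A y` with
`A (conj λ - Ts) y = 0`, hence `A y = 0`. So the compression is invertible, and its inverse,
composed with the orthogonal projection onto `R(A)`, is an `A`-inverse of `λ - T`.
-/

open scoped InnerProductSpace ComplexConjugate

section Seminorm

variable {E : Type*} [NormedAddCommGroup E] [InnerProductSpace ℂ E] {A : E →L[ℂ] E}

lemma anorm_nonneg (x : E) : 0 ≤ anorm A x := Real.sqrt_nonneg _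

lemma anorm_smul (c : ℂ) (x : E) : anorm A (c • x) = ‖c‖ * anorm A x := by
  rw [anorm, anorm, map_smul, inner_smul_left, inner_smul_right, ← mul_assoc, Complex.conj_mul',
    ← Complex.ofReal_pow, Complex.re_ofReal_mul, Real.sqrt_mul (by positivity),
    Real.sqrt_sq (norm_nonneg c)]

lemma anorm_sub_comm (x y : E) : anorm A (x - y) = anorm A (y - x) := by
  rw [← neg_sub, ← neg_one_smul ℂ, anorm_smul, norm_neg, norm_one, one_mul]

def ABoundedBelow (A L : E →L[ℂ] E) : Prop :=
  ∃ c > 0, ∀ x, c * anorm A x ≤ anorm A (L x)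

lemma ABoundedBelow.congr {L L' : E →L[ℂ] E} (hL : ABoundedBelow A L)
    (h : ∀ x, anorm A (L x) = anorm A (L' x)) : ABoundedBelow A L' := by
  obtain ⟨c, hc, hbound⟩ := hL
  exact ⟨c, hc, fun x => h x ▸ hbound x⟩

lemma mem_sigmaAapp_iff {T : E →L[ℂ] E} {μ : ℂ} :
    μ ∈ sigmaAapp A T ↔ ¬ ABoundedBelow A (μ • 1 - T) := by
  have happly : ∀ x, anorm A ((μ • 1 - T) x) = anorm A (T x - μ • x) := fun x => by
    rw [sub_apply, smul_apply, one_apply_eq_self, anorm_sub_comm]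
  constructor
  · rintro ⟨x, hx1, hx0⟩ ⟨c, hc, hbound⟩
    refine (ge_of_tendsto' hx0 fun n => ?_).not_gt hc
    simpa only [hx1 n, mul_one, happly] using hbound (x n)
  · intro hL
    have hsmall : ∀ n : ℕ, ∃ x, anorm A (T x - μ • x) < 1 / (n + 1 : ℝ) * anorm A x := by
      intro n
      by_contra! h
      exact hL ⟨_, Nat.one_div_pos_of_nat, fun x => (happly x).symm ▸ h x⟩
    choose x hx using hsmall
    have hpos : ∀ n, 0 < anorm A (x n) := fun n =>
      pos_of_mul_pos_right ((anorm_nonneg _).trans_lt (hx n)) Nat.one_div_pos_of_nat.le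
    refine ⟨fun n => ((anorm A (x n) : ℂ))⁻¹ • x n, fun n => ?_, ?_⟩
    · rw [anorm_smul, norm_inv, Complex.norm_real, Real.norm_of_nonneg (hpos n).le,
        inv_mul_cancel₀ (hpos n).ne']
    · refine squeeze_zero (fun n => anorm_nonneg _) (fun n => ?_)
        tendsto_one_div_add_atTop_nhds_zero_nat
      rw [map_smul, smul_comm μ, ← smul_sub, anorm_smul, norm_inv, Complex.norm_real,
        Real.norm_of_nonneg (hpos n).le, inv_mul_le_iff₀ (hpos n), mul_comm]
      exact (hx n).le

end Seminorm

section SqrtSeminorm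

variable {A : H →L[ℂ] H}

lemma sqrt_apply_sqrt_apply (hA : A.IsPositive) (x : H) :
    CFC.sqrt A (CFC.sqrt A x) = A x :=
  DFunLike.congr_fun (CFC.sqrt_mul_sqrt_self A ((nonneg_iff_isPositive A).2 hA)) x

lemma inner_sqrt_apply_sqrt_apply (hA : A.IsPositive) (x y : H) :
    ⟪CFC.sqrt A x, CFC.sqrt A y⟫_ℂ = ⟪A x, y⟫_ℂ := by
  rw [← ((nonneg_iff_isPositive _).1 (CFC.sqrt_nonneg A)).inner_left_eq_inner_right,
    sqrt_apply_sqrt_apply hA]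

lemma anorm_eq_norm_sqrt_apply (hA : A.IsPositive) (x : H) : anorm A x = ‖CFC.sqrt A x‖ := by
  rw [anorm, ← inner_sqrt_apply_sqrt_apply hA, ← RCLike.re_to_complex, inner_self_eq_norm_sq,
    Real.sqrt_sq (norm_nonneg _)]

lemma anorm_eq_zero_iff (hA : A.IsPositive) {x : H} : anorm A x = 0 ↔ A x = 0 := by
  refine ⟨fun h => ?_, fun h => by simp [anorm, h]⟩
  rw [anorm_eq_norm_sqrt_apply hA, norm_eq_zero] at h
  rw [← sqrt_apply_sqrt_apply hA, h, map_zero]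

lemma anorm_congr (hA : A.IsPositive) {x y : H} (h : A x = A y) : anorm A x = anorm A y := by
  have : CFC.sqrt A x = CFC.sqrt A y := by
    rw [← sub_eq_zero, ← map_sub, ← norm_eq_zero, ← anorm_eq_norm_sqrt_apply hA,
      anorm_eq_zero_iff hA, map_sub, h, sub_self]
  rw [anorm_eq_norm_sqrt_apply hA, anorm_eq_norm_sqrt_apply hA, this]

lemma anorm_le_mul_norm (hA : A.IsPositive) (x : H) : anorm A x ≤ ‖CFC.sqrt A‖ * ‖x‖ := by
  rw [anorm_eq_norm_sqrt_apply hA]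
  exact le_opNorm _ _

lemma norm_apply_le_mul_anorm (hA : A.IsPositive) (x : H) :
    ‖A x‖ ≤ ‖CFC.sqrt A‖ * anorm A x := by
  rw [anorm_eq_norm_sqrt_apply hA, ← sqrt_apply_sqrt_apply hA]
  exact le_opNorm _ _

lemma ker_eq_orthogonal_range (hA : A.IsPositive) : A.ker = A.rangeᗮ := by
  rw [orthogonal_range, hA.isSelfAdjoint.adjoint_eq]

lemma eq_zero_of_mem_range_of_apply_eq_zero (hA : A.IsPositive) {u : H} (hu : u ∈ A.range)
    (h : A u = 0) : u = 0 := by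
  have hu' : u ∈ A.rangeᗮ := ker_eq_orthogonal_range hA ▸ h
  simpa using A.range.inf_orthogonal_eq_bot.le ⟨hu, hu'⟩

lemma ABoundedBelow.apply_eq_zero {L : H →L[ℂ] H} (hA : A.IsPositive) (hL : ABoundedBelow A L)
    {x : H} (hx : A (L x) = 0) : A x = 0 := by
  obtain ⟨c, hc, hbound⟩ := hL
  have := hbound x
  rw [(anorm_eq_zero_iff hA).2 hx] at this
  exact (anorm_eq_zero_iff hA).1
    (le_antisymm (nonpos_of_mul_nonpos_right this hc) (anorm_nonneg x))

lemma AInvertibleHalf.aBoundedBelow {L : H →L[ℂ] H} (hA : A.IsPositive)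
    (hL : AInvertibleHalf A L) : ABoundedBelow A L := by
  obtain ⟨S, -, ⟨d, hd, hS⟩, -, hSL⟩ := hL
  refine ⟨d⁻¹, inv_pos.2 hd, fun x => ?_⟩
  rw [inv_mul_le_iff₀ hd, anorm_congr hA (DFunLike.congr_fun hSL x).symm]
  exact hS (L x)

end SqrtSeminorm

def IsAAdjoint (A L L' : H →L[ℂ] H) : Prop :=
  adjoint L ∘L A = A ∘L L'

namespace IsAAdjoint

variable {A L L' : H →L[ℂ] H}

lemma inner_apply_left (hA : A.IsPositive) (h : IsAAdjoint A L L') (x y : H) :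
    ⟪A (L x), y⟫_ℂ = ⟪A x, L' y⟫_ℂ := by
  rw [hA.inner_left_eq_inner_right, ← adjoint_inner_right, ← comp_apply, h, comp_apply,
    ← hA.inner_left_eq_inner_right]

lemma apply_eq_zero (hA : A.IsPositive) (h : IsAAdjoint A L L') {x : H} (hx : A x = 0) :
    A (L x) = 0 :=
  ext_inner_right ℂ fun y => by rw [h.inner_apply_left hA, hx, inner_zero_left, inner_zero_left]

lemma smul_one_sub (h : IsAAdjoint A L L') (μ : ℂ) :
    IsAAdjoint A (μ • 1 - L) (conj μ • 1 - L') := by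
  rw [IsAAdjoint, map_sub, LinearIsometryEquiv.map_smulₛₗ, adjoint_one, sub_comp, comp_sub, h,
    smul_comp, comp_smul, one_def, id_comp, comp_id]

lemma anorm_smul_one_sub_apply (hA : A.IsPositive) (h : IsAAdjoint A L L')
    (hLL' : ∀ x, anorm A (L x) = anorm A (L' x)) (μ : ℂ) (x : H) :
    anorm A ((μ • 1 - L) x) = anorm A ((conj μ • 1 - L') x) := by
  have hcross : ⟪A x, L' x⟫_ℂ = conj ⟪A x, L x⟫_ℂ := by
    rw [← h.inner_apply_left hA, hA.inner_left_eq_inner_right, inner_conj_symm]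
  simp only [anorm_eq_norm_sqrt_apply hA] at hLL' ⊢
  rw [← sq_eq_sq₀ (norm_nonneg _) (norm_nonneg _)]
  simp only [sub_apply, smul_apply, one_apply_eq_self, map_sub, map_smul]
  rw [@norm_sub_sq ℂ, @norm_sub_sq ℂ, norm_smul, norm_smul, Complex.norm_conj, inner_smul_left,
    inner_smul_left, inner_sqrt_apply_sqrt_apply hA, inner_sqrt_apply_sqrt_apply hA, hcross,
    hLL', ← map_mul, RCLike.conj_re]

end IsAAdjoint

section RangeCompression

variable {A : H →L[ℂ] H} [CompleteSpace A.range]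

lemma apply_starProjection_range (hA : A.IsPositive) (x : H) :
    A (A.range.starProjection x) = A x := by
  have hx : x - A.range.starProjection x ∈ A.ker :=
    (ker_eq_orthogonal_range hA).symm ▸ A.range.sub_starProjection_mem_orthogonal x
  rw [LinearMap.mem_ker, coe_coe, map_sub, sub_eq_zero] at hx
  exact hx.symm

lemma exists_norm_le_mul_anorm (hA : A.IsPositive) :
    ∃ C ≥ 0, ∀ u ∈ A.range, ‖u‖ ≤ C * anorm A u := by
  set f : A.range →L[ℂ] H := A ∘L A.range.subtypeL
  have hinj : Function.Injective f := (injective_iff_map_eq_zero f).2 fun u hu =>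
    Subtype.ext (eq_zero_of_mem_range_of_apply_eq_zero hA u.2 hu)
  have hrange : Set.range f = A.range := by
    refine Set.Subset.antisymm ?_ fun y ⟨x, hx⟩ => ⟨_, (apply_starProjection_range hA x).trans hx⟩
    rintro _ ⟨u, rfl⟩
    exact ⟨u, rfl⟩
  have hclosed : IsClosed (Set.range f) :=
    hrange ▸ (completeSpace_coe_iff_isComplete.1 ‹_›).isClosed
  obtain ⟨K, hK⟩ := f.antilipschitz_of_injective_of_isClosed_range hinj hclosed
  refine ⟨K * ‖CFC.sqrt A‖, by positivity, fun u hu => ?_⟩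
  calc ‖u‖ ≤ K * ‖A u‖ := f.bound_of_antilipschitz hK ⟨u, hu⟩
    _ ≤ K * (‖CFC.sqrt A‖ * anorm A u) := by gcongr; exact norm_apply_le_mul_anorm hA u
    _ = K * ‖CFC.sqrt A‖ * anorm A u := by ring

noncomputable def rangeCompression (A L : H →L[ℂ] H) [CompleteSpace A.range] :
    A.range →L[ℂ] A.range :=
  A.range.orthogonalProjectionOnto ∘L L ∘L A.range.subtypeL

variable {L : H →L[ℂ] H}

lemma apply_rangeCompression (hA : A.IsPositive) (u : A.range) :
    A (rangeCompression A L u) = A (L u) :=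
  apply_starProjection_range hA (L u)

lemma rangeCompression_orthogonalProjectionOnto {L' : H →L[ℂ] H} (hA : A.IsPositive)
    (h : IsAAdjoint A L L') (x : H) :
    rangeCompression A L (A.range.orthogonalProjectionOnto x) =
      A.range.orthogonalProjectionOnto (L x) := by
  have hker : A (L (x - A.range.starProjection x)) = 0 :=
    h.apply_eq_zero hA (by rw [map_sub, apply_starProjection_range hA, sub_self])
  have hperp : L (x - A.range.starProjection x) ∈ A.rangeᗮ := ker_eq_orthogonal_range hA ▸ hker
  have hP := Submodule.orthogonalProjectionOnto_apply_of_mem_orthogonal hperp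
  rw [map_sub, map_sub, sub_eq_zero] at hP
  exact hP.symm

lemma antilipschitz_rangeCompression (hA : A.IsPositive) (hL : ABoundedBelow A L) :
    ∃ K, AntilipschitzWith K (rangeCompression A L) := by
  obtain ⟨C, hC0, hC⟩ := exists_norm_le_mul_anorm hA
  obtain ⟨c, hc, hbound⟩ := hL
  refine ⟨(C * ‖CFC.sqrt A‖ / c).toNNReal,
    (rangeCompression A L).antilipschitz_of_bound fun u => ?_⟩
  rw [Real.coe_toNNReal _ (by positivity), div_mul_eq_mul_div, le_div_iff₀ hc, mul_comm]
  calc c * ‖u‖ ≤ c * (C * anorm A u) := by gcongr; exact hC u u.2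
    _ = C * (c * anorm A u) := by ring
    _ ≤ C * anorm A (rangeCompression A L u) := by
        rw [anorm_congr hA (apply_rangeCompression hA u)]
        gcongr
        exact hbound u
    _ ≤ C * (‖CFC.sqrt A‖ * ‖rangeCompression A L u‖) := by
        gcongr
        exact anorm_le_mul_norm hA _
    _ = C * ‖CFC.sqrt A‖ * ‖rangeCompression A L u‖ := by ring

lemma orthogonal_range_rangeCompression {L' : H →L[ℂ] H} (hA : A.IsPositive)
    (h : IsAAdjoint A L L') (hL' : ABoundedBelow A L') : (rangeCompression A L).rangeᗮ = ⊥ := by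
  refine (Submodule.eq_bot_iff _).2 fun z hz => ?_
  obtain ⟨y, hy⟩ : ∃ y, A y = z := z.2
  have hperp : ∀ x, ⟪x, A (L' y)⟫_ℂ = 0 := fun x => by
    rw [← hA.inner_left_eq_inner_right, ← apply_starProjection_range hA x,
      Submodule.starProjection_apply, ← h.inner_apply_left hA, ← apply_rangeCompression hA,
      hA.inner_left_eq_inner_right, hy, ← Submodule.coe_inner]
    exact (Submodule.mem_orthogonal _ _).1 hz _ (LinearMap.mem_range_self _ _)
  have hy0 : A y = 0 := hL'.apply_eq_zero hA (inner_self_eq_zero.1 (hperp _))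
  exact Subtype.ext (hy.symm.trans hy0)

end RangeCompression

theorem IsAAdjoint.aInvertibleHalf {A L L' : H →L[ℂ] H} [CompleteSpace A.range]
    (hA : A.IsPositive) (hA0 : A ≠ 0) (h : IsAAdjoint A L L') (hL : ABoundedBelow A L)
    (hL' : ABoundedBelow A L') : AInvertibleHalf A L := by
  obtain ⟨K, hK⟩ := antilipschitz_rangeCompression hA hL
  have hbij : Function.Bijective (rangeCompression A L) :=
    (bijective_iff_dense_range_and_antilipschitz _).2
      ⟨Submodule.topologicalClosure_eq_top_iff.2 (orthogonal_range_rangeCompression hA h hL'), K, hK⟩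
  obtain ⟨e, he⟩ : ∃ e : A.range ≃L[ℂ] A.range, ⇑e = rangeCompression A L :=
    ⟨.ofBijective _ (LinearMap.ker_eq_bot.2 hbij.1) (LinearMap.range_eq_top.2 hbij.2), rfl⟩
  set P := A.range.orthogonalProjectionOnto
  set S : H →L[ℂ] H := A.range.subtypeL ∘L (e.symm : A.range →L[ℂ] A.range) ∘L P
  have hLS : A ∘L L ∘L S = A := by
    ext x
    have hx : rangeCompression A L (e.symm (P x)) = P x := by rw [← he, e.apply_symm_apply]
    change A (L (e.symm (P x) : H)) = A x
    rw [← apply_rangeCompression hA, hx, ← Submodule.starProjection_apply,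
      apply_starProjection_range hA]
  have hSL : A ∘L S ∘L L = A := by
    ext x
    have hx : e.symm (P (L x)) = P x := by
      rw [← rangeCompression_orthogonalProjectionOnto hA h, ← he, e.symm_apply_apply]
    change A (e.symm (P (L x)) : H) = A x
    rw [hx, ← Submodule.starProjection_apply, apply_starProjection_range hA]
  obtain ⟨c, hc, hbound⟩ := hL
  refine ⟨S, ?_, ⟨c⁻¹, inv_pos.2 hc, fun x => ?_⟩, hLS, hSL⟩
  · intro hS
    exact hA0 (by rw [← hLS, hS, comp_zero, comp_zero])
  · rw [← anorm_congr hA (DFunLike.congr_fun hLS x), le_inv_mul_iff₀ hc]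
    exact hbound (S x)

theorem stmt19_general (A T Ts : H →L[ℂ] H) (hA : A.IsPositive) (hA0 : A ≠ 0)
    (hclosed : IsClosed (Set.range A))
    (hTs : (ContinuousLinearMap.adjoint T) ∘L A = A ∘L Ts)
    (hnormal : ∀ x : H, anorm A (T x) = anorm A (Ts x)) :
    sigmaA A T = sigmaAapp A T := by
  have hclosed' : IsClosed (A.range : Set H) := by rwa [LinearMap.coe_range, coe_coe]
  have : CompleteSpace A.range := hclosed'.completeSpace_coe
  ext μ
  rw [sigmaA, Set.mem_ofPred_eq, mem_sigmaAapp_iff, not_iff_not]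
  refine ⟨AInvertibleHalf.aBoundedBelow hA, fun hL => ?_⟩
  exact (IsAAdjoint.smul_one_sub hTs μ).aInvertibleHalf hA hA0 hL
    (hL.congr (IsAAdjoint.anorm_smul_one_sub_apply hA hTs hnormal μ))

/-- if `T ∈ B_A(H)` is `A`-normal and `R(A)` is closed, then
`σ_A(T) = σ_{A,app}(T)`. -/
theorem stmt19 (A T Ts : H →L[ℂ] H) (hA : A.IsPositive) (hA0 : A ≠ 0)
    (hclosed : IsClosed (Set.range A))
    (hT : MemBA A T)
    (hTs : (ContinuousLinearMap.adjoint T) ∘L A = A ∘L Ts)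
    (hTsr : Set.range Ts ⊆ closure (Set.range A))
    (hnormal : ∀ x : H, anorm A (T x) = anorm A (Ts x)) :
    sigmaA A T = sigmaAapp A T :=
  stmt19_general A T Ts hA hA0 hclosed hTs hnormal
end
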